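/- Let 1 < p < 2 and let B ∈ GL_3(ℝ) satisfy ‖Bu‖_p = 1 for all u ∈ 𝒰³. Then ‖Bu‖_p ≥ 1 for every nonzero vector u ∈ ℤ³ all of whose coordinates lie in {−1, 0, 1}. -/

import Mathlib

/-!
Split `u = u⁺ - u⁻` into its positive and negative parts, both `0/1` vectors. If one of them
vanishes, `u` or `-u` lies in `𝒰³`. Otherwise `u⁺`, `u⁻` and `u⁺ + u⁻ = |u|` all lie in `𝒰³`,
so `x = B u⁺` and `y = B u⁻` satisfy `‖x‖_p = ‖y‖_p = ‖x + y‖_p = 1`. For `p ≥ 1` the scalar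
inequality `|a|^p + |b|^p ≤ (|a| + |b|)^p ≤ |a + b|^p + |a - b|^p`, summed over coordinates, gives
`‖x - y‖_p^p ≥ ‖x‖_p^p + ‖y‖_p^p - ‖x + y‖_p^p = 1`.
-/

open Finset

/-- The ℓ^p norm on ℝⁿ: `(∑ i, |x i| ^ p) ^ (1/p)`. -/
noncomputable def lpNorm {n : ℕ} (p : ℝ) (x : Fin n → ℝ) : ℝ :=
  (∑ i, |x i| ^ p) ^ (1 / p)

/-- The set 𝒰³ = {±(1,0,0), ±(0,1,0), ±(0,0,1), ±(1,1,0), ±(0,1,1), ±(1,0,1), ±(1,1,1)} ⊆ ℤ³. -/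
def U3 : Set (Fin 3 → ℤ) :=
  {![1,0,0], ![0,1,0], ![0,0,1], ![1,1,0], ![0,1,1], ![1,0,1], ![1,1,1],
   -![1,0,0], -![0,1,0], -![0,0,1], -![1,1,0], -![0,1,1], -![1,0,1], -![1,1,1]}

lemma abs_add_abs_le_abs_add_or_abs_sub (a b : ℝ) :
    |a| + |b| ≤ |a + b| ∨ |a| + |b| ≤ |a - b| := by
  rcases le_total 0 a with ha | ha <;> rcases le_total 0 b with hb | hb
  · left; rw [abs_of_nonneg ha, abs_of_nonneg hb]; exact le_abs_self _
  · right; rw [abs_of_nonneg ha, abs_of_nonpos hb]; linarith [le_abs_self (a - b)]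
  · right; rw [abs_of_nonpos ha, abs_of_nonneg hb]; linarith [neg_le_abs (a - b)]
  · left; rw [abs_of_nonpos ha, abs_of_nonpos hb]; linarith [neg_le_abs (a + b)]

lemma abs_rpow_add_abs_rpow_le {p : ℝ} (hp : 1 ≤ p) (a b : ℝ) :
    |a| ^ p + |b| ^ p ≤ |a + b| ^ p + |a - b| ^ p := by
  have hsuper : |a| ^ p + |b| ^ p ≤ (|a| + |b|) ^ p :=
    Real.add_rpow_le_rpow_add (abs_nonneg a) (abs_nonneg b) hp
  have hmono {c : ℝ} (h : |a| + |b| ≤ c) : (|a| + |b|) ^ p ≤ c ^ p :=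
    Real.rpow_le_rpow (by positivity) h (by linarith)
  rcases abs_add_abs_le_abs_add_or_abs_sub a b with h | h <;>
    linarith [hmono h, Real.rpow_nonneg (abs_nonneg (a + b)) p,
      Real.rpow_nonneg (abs_nonneg (a - b)) p]

lemma lpNorm_rpow {n : ℕ} {p : ℝ} (hp : p ≠ 0) (x : Fin n → ℝ) :
    lpNorm p x ^ p = ∑ i, |x i| ^ p := by
  rw [lpNorm, one_div, Real.rpow_inv_rpow (by positivity) hp]

lemma one_le_lpNorm_sub {n : ℕ} {p : ℝ} (hp : 1 ≤ p) {x y : Fin n → ℝ}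
    (hx : lpNorm p x = 1) (hy : lpNorm p y = 1) (hxy : lpNorm p (x + y) = 1) :
    1 ≤ lpNorm p (x - y) := by
  have hsum {z : Fin n → ℝ} (hz : lpNorm p z = 1) : ∑ i, |z i| ^ p = 1 := by
    rw [← lpNorm_rpow (by linarith) z, hz, Real.one_rpow]
  have hpt : ∑ i, (|x i| ^ p + |y i| ^ p) ≤ ∑ i, (|(x + y) i| ^ p + |(x - y) i| ^ p) :=
    sum_le_sum fun i _ => abs_rpow_add_abs_rpow_le hp (x i) (y i)
  rw [sum_add_distrib, sum_add_distrib, hsum hx, hsum hy, hsum hxy] at hpt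
  exact Real.one_le_rpow (by linarith) (by positivity)

lemma one_le_lpNorm_mulVec_sub {m n : ℕ} {p : ℝ} (hp : 1 ≤ p) (B : Matrix (Fin m) (Fin n) ℝ)
    {a b : Fin n → ℤ} (ha : lpNorm p (B.mulVec fun i => (a i : ℝ)) = 1)
    (hb : lpNorm p (B.mulVec fun i => (b i : ℝ)) = 1)
    (hab : lpNorm p (B.mulVec fun i => ((a + b) i : ℝ)) = 1) :
    1 ≤ lpNorm p (B.mulVec fun i => ((a - b) i : ℝ)) := by
  have cast_add : (fun i => ((a + b) i : ℝ)) = (fun i => (a i : ℝ)) + fun i => (b i : ℝ) := by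
    ext; simp
  have cast_sub : (fun i => ((a - b) i : ℝ)) = (fun i => (a i : ℝ)) - fun i => (b i : ℝ) := by
    ext; simp
  rw [cast_add, Matrix.mulVec_add] at hab
  rw [cast_sub, Matrix.mulVec_sub]
  exact one_le_lpNorm_sub hp ha hb hab

lemma mem_U3_of_nonneg_of_le_one {u : Fin 3 → ℤ} (hu : u ≠ 0) (h0 : 0 ≤ u) (h1 : u ≤ 1) :
    u ∈ U3 := by
  obtain ⟨a, b, c, rfl⟩ : ∃ a b c, u = ![a, b, c] :=
    ⟨u 0, u 1, u 2, by ext i; fin_cases i <;> rfl⟩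
  obtain ⟨ha0, ha1⟩ : 0 ≤ a ∧ a ≤ 1 := ⟨h0 0, h1 0⟩
  obtain ⟨hb0, hb1⟩ : 0 ≤ b ∧ b ≤ 1 := ⟨h0 1, h1 1⟩
  obtain ⟨hc0, hc1⟩ : 0 ≤ c ∧ c ≤ 1 := ⟨h0 2, h1 2⟩
  interval_cases a <;> interval_cases b <;> interval_cases c <;> simp [U3] at hu ⊢

lemma neg_mem_U3 {u : Fin 3 → ℤ} (hu : u ∈ U3) : -u ∈ U3 := by
  simp only [U3, Set.mem_insert_iff, Set.mem_singleton_iff] at hu ⊢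
  rcases hu with rfl | rfl | rfl | rfl | rfl | rfl | rfl | rfl | rfl | rfl | rfl | rfl | rfl | rfl <;>
    simp

theorem norm_ge_one_of_small_coords_general (p : ℝ) (hp1 : 1 < p)
    (B : Matrix (Fin 3) (Fin 3) ℝ)
    (h : ∀ u ∈ U3, lpNorm p (B.mulVec (fun i => (u i : ℝ))) = 1) :
    ∀ u : Fin 3 → ℤ, u ≠ 0 → (∀ i, |u i| ≤ 1) →
      1 ≤ lpNorm p (B.mulVec (fun i => (u i : ℝ))) := by
  intro u hu hsmall
  have habs : |u| ≤ 1 := hsmall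
  obtain ⟨hup, hlow⟩ : u ≤ 1 ∧ -u ≤ 1 := sup_le_iff.mp habs
  by_cases hneg : u⁻ = 0
  · exact (h u (mem_U3_of_nonneg_of_le_one hu (negPart_eq_zero.mp hneg) hup)).ge
  by_cases hpos : u⁺ = 0
  · have : -u ∈ U3 := mem_U3_of_nonneg_of_le_one (neg_ne_zero.mpr hu)
      (neg_nonneg.mpr (posPart_eq_zero.mp hpos)) hlow
    exact (h u (by simpa using neg_mem_U3 this)).ge
  have hpos_mem : u⁺ ∈ U3 :=
    mem_U3_of_nonneg_of_le_one hpos (posPart_nonneg u) (sup_le hup zero_le_one)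
  have hneg_mem : u⁻ ∈ U3 :=
    mem_U3_of_nonneg_of_le_one hneg (negPart_nonneg u) (sup_le hlow zero_le_one)
  have habs_mem : u⁺ + u⁻ ∈ U3 := by
    refine mem_U3_of_nonneg_of_le_one ?_ (add_nonneg (posPart_nonneg u) (negPart_nonneg u))
      (posPart_add_negPart u ▸ habs)
    rw [Ne, add_eq_zero_iff_of_nonneg (posPart_nonneg u) (negPart_nonneg u)]
    tauto
  rw [← posPart_sub_negPart u]
  exact one_le_lpNorm_mulVec_sub hp1.le B (h _ hpos_mem) (h _ hneg_mem) (h _ habs_mem)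

/-- If `1 < p < 2` and `B ∈ GL₃(ℝ)` satisfies `‖Bu‖_p = 1` for all `u ∈ 𝒰³`, then
`‖Bu‖_p ≥ 1` for every nonzero `u ∈ ℤ³` with all coordinates in `{−1, 0, 1}`. -/
theorem norm_ge_one_of_small_coords (p : ℝ) (hp1 : 1 < p) (hp2 : p < 2)
    (B : Matrix (Fin 3) (Fin 3) ℝ) (hB : IsUnit B)
    (h : ∀ u ∈ U3, lpNorm p (B.mulVec (fun i => (u i : ℝ))) = 1) :
    ∀ u : Fin 3 → ℤ, u ≠ 0 → (∀ i, |u i| ≤ 1) →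
      1 ≤ lpNorm p (B.mulVec (fun i => (u i : ℝ))) :=
  norm_ge_one_of_small_coords_general p hp1 B h
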